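/- Let V be a 3-dimensional real vector space with basis {T, X, Y}, φ a symmetric bilinear form with only nonzero entries φ(T,T) = φ(X,Y) = φ(Y,X) = 1, A an algebraic curvature tensor whose nonzero entries up to symmetry are generated by A(T,X,X,T) = ε₀ ≠ 0, and A₁ a 5-tensor with the symmetries of an algebraic covariant derivative curvature tensor whose only nonzero entries up to symmetry are generated by A₁(T,X,X,T;T) = ε₁ ≠ 0. If F : V → V is a linear isomorphism preserving φ, A, and A₁ (under pullback), then there exist real numbers b₁, b₂, b₃, b₄ with b₂² = 1 such that FT = T + b₁Y, FX = b₂X + b₃Y, and FY = b₄Y. -/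

import Mathlib

def dN : Fin 3 → Fin 3 → ℤ := fun i j =>
  if i = 0 ∧ j = 1 then 1 else if i = 1 ∧ j = 0 then -1 else 0

noncomputable def ddR : Fin 3 → Fin 3 → ℝ := fun i j => ((dN i j : ℤ) : ℝ)

set_option maxHeartbeats 2000000 in
/-- isomorphism group of the model space (V, φ, A, A₁) with
φ(T,T) = φ(X,Y) = 1, A generated by A(T,X,X,T) = ε₀ ≠ 0 and A₁ generated by
A₁(T,X,X,T;T) = ε₁ ≠ 0. -/
theorem stmt1 (V : Type*) [AddCommGroup V] [Module ℝ V]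
    (b : Module.Basis (Fin 3) ℝ V)
    (T X Y : V) (hT : T = b 0) (hX : X = b 1) (hY : Y = b 2)
    (φ : V →ₗ[ℝ] V →ₗ[ℝ] ℝ)
    (hφsymm : ∀ u v, φ u v = φ v u)
    (hφTT : φ T T = 1) (hφXY : φ X Y = 1)
    (hφTX : φ T X = 0) (hφTY : φ T Y = 0)
    (hφXX : φ X X = 0) (hφYY : φ Y Y = 0)
    (A : V →ₗ[ℝ] V →ₗ[ℝ] V →ₗ[ℝ] V →ₗ[ℝ] ℝ)
    (hA1 : ∀ x y z w, A x y z w = -A y x z w)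
    (hA2 : ∀ x y z w, A x y z w = -A x y w z)
    (hA3 : ∀ x y z w, A x y z w = A z w x y)
    (hBianchi : ∀ x y z w, A x y z w + A y z x w + A z x y w = 0)
    (ε₀ : ℝ) (hε₀ : ε₀ ≠ 0)
    (hATXXT : A T X X T = ε₀)
    (hAzero : ∀ i j k l : Fin 3,
      ¬((i = 0 ∧ j = 1 ∧ k = 1 ∧ l = 0) ∨ (i = 1 ∧ j = 0 ∧ k = 0 ∧ l = 1) ∨
        (i = 0 ∧ j = 1 ∧ k = 0 ∧ l = 1) ∨ (i = 1 ∧ j = 0 ∧ k = 1 ∧ l = 0)) →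
      A (b i) (b j) (b k) (b l) = 0)
    (A₁ : V →ₗ[ℝ] V →ₗ[ℝ] V →ₗ[ℝ] V →ₗ[ℝ] V →ₗ[ℝ] ℝ)
    (hA₁1 : ∀ x y z w v, A₁ x y z w v = -A₁ y x z w v)
    (hA₁2 : ∀ x y z w v, A₁ x y z w v = -A₁ x y w z v)
    (hA₁3 : ∀ x y z w v, A₁ x y z w v = A₁ z w x y v)
    (hA₁Bianchi1 : ∀ x y z w v, A₁ x y z w v + A₁ y z x w v + A₁ z x y w v = 0)
    (hA₁Bianchi2 : ∀ x y z w v, A₁ x y z w v + A₁ y v z w x + A₁ v x z w y = 0)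
    (ε₁ : ℝ) (hε₁ : ε₁ ≠ 0)
    (hA₁TXXTT : A₁ T X X T T = ε₁)
    (hA₁zero : ∀ i j k l m : Fin 3,
      ¬(m = 0 ∧
        ((i = 0 ∧ j = 1 ∧ k = 1 ∧ l = 0) ∨ (i = 1 ∧ j = 0 ∧ k = 0 ∧ l = 1) ∨
         (i = 0 ∧ j = 1 ∧ k = 0 ∧ l = 1) ∨ (i = 1 ∧ j = 0 ∧ k = 1 ∧ l = 0))) →
      A₁ (b i) (b j) (b k) (b l) (b m) = 0)
    (F : V ≃ₗ[ℝ] V)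
    (hFφ : ∀ u v, φ (F u) (F v) = φ u v)
    (hFA : ∀ x y z w, A (F x) (F y) (F z) (F w) = A x y z w)
    (hFA₁ : ∀ x y z w v, A₁ (F x) (F y) (F z) (F w) (F v) = A₁ x y z w v) :
    ∃ b₁ b₂ b₃ b₄ : ℝ, b₂ ^ 2 = 1 ∧
      F T = T + b₁ • Y ∧
      F X = b₂ • X + b₃ • Y ∧
      F Y = b₄ • Y := by
  subst hT hX hY
  -- entries of ddR
  have e00 : ddR 0 0 = 0 := by simp [ddR, dN]
  have e01 : ddR 0 1 = 1 := by simp [ddR, dN]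
  have e02 : ddR 0 2 = 0 := by simp [ddR, dN]
  have e10 : ddR 1 0 = -1 := by simp [ddR, dN]
  have e11 : ddR 1 1 = 0 := by simp [ddR, dN]
  have e12 : ddR 1 2 = 0 := by simp [ddR, dN]
  have e20 : ddR 2 0 = 0 := by simp [ddR, dN]
  have e21 : ddR 2 1 = 0 := by simp [ddR, dN]
  have e22 : ddR 2 2 = 0 := by simp [ddR, dN]
  have f0 : (if (0 : Fin 3) = 0 then (1:ℝ) else 0) = 1 := by rw [if_pos rfl]
  have f1 : (if (1 : Fin 3) = 0 then (1:ℝ) else 0) = 0 := by rw [if_neg (by decide)]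
  have f2 : (if (2 : Fin 3) = 0 then (1:ℝ) else 0) = 0 := by rw [if_neg (by decide)]
  -- derived curvature values
  have a1 : A (b 0) (b 1) (b 0) (b 1) = -ε₀ := by
    rw [hA2 (b 0) (b 1) (b 0) (b 1), hATXXT]
  have a2 : A (b 1) (b 0) (b 0) (b 1) = ε₀ := by
    rw [hA1 (b 1) (b 0) (b 0) (b 1), a1]; ring
  have a3 : A (b 1) (b 0) (b 1) (b 0) = -ε₀ := by
    rw [hA1 (b 1) (b 0) (b 1) (b 0), hATXXT]
  have c1 : A₁ (b 0) (b 1) (b 0) (b 1) (b 0) = -ε₁ := by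
    rw [hA₁2 (b 0) (b 1) (b 0) (b 1) (b 0), hA₁TXXTT]
  have c2 : A₁ (b 1) (b 0) (b 0) (b 1) (b 0) = ε₁ := by
    rw [hA₁1 (b 1) (b 0) (b 0) (b 1) (b 0), c1]; ring
  have c3 : A₁ (b 1) (b 0) (b 1) (b 0) (b 0) = -ε₁ := by
    rw [hA₁1 (b 1) (b 0) (b 1) (b 0) (b 0), hA₁TXXTT]
  -- the combinatorial zero lemma, over ℤ by decide
  have hAzeroZ : ∀ i j k l : Fin 3,
      ¬((i = 0 ∧ j = 1 ∧ k = 1 ∧ l = 0) ∨ (i = 1 ∧ j = 0 ∧ k = 0 ∧ l = 1) ∨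
        (i = 0 ∧ j = 1 ∧ k = 0 ∧ l = 1) ∨ (i = 1 ∧ j = 0 ∧ k = 1 ∧ l = 0)) →
      dN i j * dN l k = 0 := by decide
  -- values of A on basis vectors
  have hAval : ∀ i j k l : Fin 3,
      A (b i) (b j) (b k) (b l) = ε₀ * (ddR i j * ddR l k) := by
    intro i j k l
    by_cases h : ((i = 0 ∧ j = 1 ∧ k = 1 ∧ l = 0) ∨ (i = 1 ∧ j = 0 ∧ k = 0 ∧ l = 1) ∨
        (i = 0 ∧ j = 1 ∧ k = 0 ∧ l = 1) ∨ (i = 1 ∧ j = 0 ∧ k = 1 ∧ l = 0))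
    · rcases h with ⟨hi, hj, hk, hl⟩ | ⟨hi, hj, hk, hl⟩ | ⟨hi, hj, hk, hl⟩ | ⟨hi, hj, hk, hl⟩ <;>
        subst hi <;> subst hj <;> subst hk <;> subst hl <;>
        simp only [hATXXT, a1, a2, a3, e01, e10] <;> ring
    · have hz : ddR i j * ddR l k = 0 := by
        have hzz := hAzeroZ i j k l h
        unfold ddR
        exact_mod_cast hzz
      rw [hAzero i j k l h, hz, mul_zero]
  -- values of A₁ on basis vectors
  have hA₁val : ∀ i j k l m : Fin 3,
      A₁ (b i) (b j) (b k) (b l) (b m) =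
        ε₁ * (ddR i j * ddR l k * (if m = 0 then (1:ℝ) else 0)) := by
    intro i j k l m
    by_cases hm : m = 0
    · subst hm
      by_cases h : ((i = 0 ∧ j = 1 ∧ k = 1 ∧ l = 0) ∨ (i = 1 ∧ j = 0 ∧ k = 0 ∧ l = 1) ∨
          (i = 0 ∧ j = 1 ∧ k = 0 ∧ l = 1) ∨ (i = 1 ∧ j = 0 ∧ k = 1 ∧ l = 0))
      · rcases h with ⟨hi, hj, hk, hl⟩ | ⟨hi, hj, hk, hl⟩ | ⟨hi, hj, hk, hl⟩ | ⟨hi, hj, hk, hl⟩ <;>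
          subst hi <;> subst hj <;> subst hk <;> subst hl <;>
          simp only [hA₁TXXTT, c1, c2, c3, e01, e10, f0] <;> simp
      · have hz : ddR i j * ddR l k = 0 := by
          have hzz := hAzeroZ i j k l h
          unfold ddR
          exact_mod_cast hzz
        rw [hA₁zero i j k l 0 (by tauto), hz]
        ring
    · rw [hA₁zero i j k l m (by tauto), if_neg hm]
      ring
  -- symmetric φ values
  have p10 : φ (b 1) (b 0) = 0 := (hφsymm (b 1) (b 0)).trans hφTX
  have p20 : φ (b 2) (b 0) = 0 := (hφsymm (b 2) (b 0)).trans hφTY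
  have p21 : φ (b 2) (b 1) = 1 := (hφsymm (b 2) (b 1)).trans hφXY
  -- coordinate expansion
  have hrep : ∀ v : V, v = b.repr v 0 • b 0 + b.repr v 1 • b 1 + b.repr v 2 • b 2 := by
    intro v
    have h := b.sum_repr v
    rw [Fin.sum_univ_three] at h
    exact h.symm
  have keyφ : ∀ u v, φ u v =
      b.repr u 0 * b.repr v 0 + b.repr u 1 * b.repr v 2 + b.repr u 2 * b.repr v 1 := by
    intro u v
    conv_lhs => rw [hrep u, hrep v]
    simp only [map_add, map_smul, LinearMap.add_apply, LinearMap.smul_apply, smul_eq_mul,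
      hφTT, hφXY, hφTX, hφTY, hφXX, hφYY, p10, p20, p21]
    ring
  have keyA : ∀ u v w z, A u v w z = ε₀ *
      ((b.repr u 0 * b.repr v 1 - b.repr u 1 * b.repr v 0) *
       (b.repr z 0 * b.repr w 1 - b.repr z 1 * b.repr w 0)) := by
    intro u v w z
    conv_lhs => rw [hrep u, hrep v, hrep w, hrep z]
    simp only [map_add, map_smul, LinearMap.add_apply, LinearMap.smul_apply, smul_eq_mul, hAval,
      e00, e01, e02, e10, e11, e12, e20, e21, e22]
    ring
  have keyA₁ : ∀ u v w z p, A₁ u v w z p = ε₁ *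
      ((b.repr u 0 * b.repr v 1 - b.repr u 1 * b.repr v 0) *
       (b.repr z 0 * b.repr w 1 - b.repr z 1 * b.repr w 0) * b.repr p 0) := by
    intro u v w z p
    conv_lhs => rw [hrep u, hrep v, hrep w, hrep z, hrep p]
    simp only [map_add, map_smul, LinearMap.add_apply, LinearMap.smul_apply, smul_eq_mul, hA₁val,
      e00, e01, e02, e10, e11, e12, e20, e21, e22, f0, f1, f2, if_true]
    ring
  -- the equations
  have E2 := hFφ (b 0) (b 1)
  rw [keyφ (F (b 0)) (F (b 1)), hφTX] at E2
  have E3 := hFφ (b 0) (b 2)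
  rw [keyφ (F (b 0)) (F (b 2)), hφTY] at E3
  have E4 := hFφ (b 1) (b 1)
  rw [keyφ (F (b 1)) (F (b 1)), hφXX] at E4
  have E5 := hFφ (b 1) (b 2)
  rw [keyφ (F (b 1)) (F (b 2)), hφXY] at E5
  have EA := hFA (b 0) (b 1) (b 1) (b 0)
  rw [keyA (F (b 0)) (F (b 1)) (F (b 1)) (F (b 0)), hATXXT] at EA
  have EB := hFA (b 0) (b 2) (b 1) (b 0)
  rw [keyA (F (b 0)) (F (b 2)) (F (b 1)) (F (b 0)), hAzero 0 2 1 0 (by decide)] at EB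
  have EC := hFA₁ (b 0) (b 1) (b 1) (b 0) (b 0)
  rw [keyA₁ (F (b 0)) (F (b 1)) (F (b 1)) (F (b 0)) (F (b 0)), hA₁TXXTT] at EC
  have ED := hFA₁ (b 0) (b 1) (b 1) (b 0) (b 1)
  rw [keyA₁ (F (b 0)) (F (b 1)) (F (b 1)) (F (b 0)) (F (b 1)),
    hA₁zero 0 1 1 0 1 (by decide)] at ED
  have EE := hFA₁ (b 0) (b 1) (b 1) (b 0) (b 2)
  rw [keyA₁ (F (b 0)) (F (b 1)) (F (b 1)) (F (b 0)) (F (b 2)),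
    hA₁zero 0 1 1 0 2 (by decide)] at EE
  -- name the coordinates
  set t0 := b.repr (F (b 0)) 0 with ht0d
  set t1 := b.repr (F (b 0)) 1 with ht1d
  set t2 := b.repr (F (b 0)) 2 with ht2d
  set x0 := b.repr (F (b 1)) 0 with hx0d
  set x1 := b.repr (F (b 1)) 1 with hx1d
  set x2 := b.repr (F (b 1)) 2 with hx2d
  set y0 := b.repr (F (b 2)) 0 with hy0d
  set y1 := b.repr (F (b 2)) 1 with hy1d
  set y2 := b.repr (F (b 2)) 2 with hy2d
  -- algebra
  have D2 : (t0 * x1 - t1 * x0) * (t0 * x1 - t1 * x0) = 1 := by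
    apply mul_left_cancel₀ hε₀; linear_combination EA
  have DE : (t0 * y1 - t1 * y0) * (t0 * x1 - t1 * x0) = 0 := by
    apply mul_left_cancel₀ hε₀; linear_combination EB
  have ht0v : t0 = 1 := by
    apply mul_left_cancel₀ hε₁; linear_combination EC - ε₁ * t0 * D2
  have hx0v : x0 = 0 := by
    apply mul_left_cancel₀ hε₁; linear_combination ED - ε₁ * x0 * D2
  have hy0v : y0 = 0 := by
    apply mul_left_cancel₀ hε₁; linear_combination EE - ε₁ * y0 * D2
  rw [ht0v] at D2 DE E2 E3
  rw [hx0v] at D2 DE E2 E4 E5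
  rw [hy0v] at DE E3 E5
  have hx1sq : x1 ^ 2 = 1 := by linear_combination D2
  have hy1v : y1 = 0 := by linear_combination x1 * DE - y1 * hx1sq
  have hx2v : x2 = 0 := by linear_combination (x1 / 2) * E4 - x2 * hx1sq
  have hy2v : y2 = x1 := by linear_combination x1 * E5 - y2 * hx1sq - x1 * x2 * hy1v
  have ht1v : t1 = 0 := by
    linear_combination x1 * E3 - x1 * t1 * hy2v - t1 * hx1sq - x1 * t2 * hy1v
  have ht2v : t2 = 0 := by linear_combination x1 * E2 - t2 * hx1sq - x1 * t1 * hx2v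
  refine ⟨0, x1, 0, x1, hx1sq, ?_, ?_, ?_⟩
  · have e := hrep (F (b 0))
    rw [← ht0d, ← ht1d, ← ht2d] at e
    rw [e, ht0v, ht1v, ht2v]
    simp
  · have e := hrep (F (b 1))
    rw [← hx0d, ← hx1d, ← hx2d] at e
    rw [e, hx0v, hx2v]
    simp
  · have e := hrep (F (b 2))
    rw [← hy0d, ← hy1d, ← hy2d] at e
    rw [e, hy0v, hy1v, hy2v]
    simp
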